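/- arXiv:2604.15100 — 4 statements merged into one kernel-verified Lean document; each statement's English description precedes it below -/
import Mathlib

section
/- Let C be a category with pullbacks, a terminal object ⊤, and strict initial objects, such that ⊤ is an extremal generator. Then for any object X and any two global elements x, y : ⊤ ⟶ X with x ≠ y, the pullback of x and y is an initial object of C. -/
open CategoryTheory CategoryTheory.Limits

universe v u

section

variable {C : Type u} [Category.{v} C] [HasTerminal C]

/-- Both legs of a global element of `pullback x y` are the identity of `⊤_ C`. -/
theorem eq_of_globalElement_pullback [HasPullbacks C] {X : C} {x y : ⊤_ C ⟶ X}
    (z : ⊤_ C ⟶ pullback x y) : x = y := by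
  have hfst : z ≫ pullback.fst x y = 𝟙 _ := Subsingleton.elim _ _
  have hsnd : z ≫ pullback.snd x y = 𝟙 _ := Subsingleton.elim _ _
  calc x = (z ≫ pullback.fst x y) ≫ x := by rw [hfst, Category.id_comp]
    _ = (z ≫ pullback.snd x y) ≫ y := by simp only [Category.assoc, pullback.condition]
    _ = y := by rw [hsnd, Category.id_comp]

/-- With strict initial objects `⊥_ C ⟶ A` is mono, and it vacuously hits every global
element of `A`. -/
theorem nonempty_isInitial_of_isEmpty_globalElements [HasInitial C]
    [HasStrictInitialObjects C]
    (hext : ∀ {A B : C} (m : A ⟶ B), Mono m →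
      (∀ x : ⊤_ C ⟶ B, ∃ y : ⊤_ C ⟶ A, y ≫ m = x) → IsIso m)
    {A : C} (hA : IsEmpty (⊤_ C ⟶ A)) : Nonempty (IsInitial A) := by
  have : IsIso (initial.to A) := hext _ inferInstance fun x => hA.elim x
  exact ⟨initialIsInitial.ofIso (asIso (initial.to A))⟩

end

theorem pullback_of_distinct_points_isInitial_general {C : Type u} [Category.{v} C]
    [HasPullbacks C] [HasTerminal C] [HasInitial C] [HasStrictInitialObjects C]
    (hext : ∀ {A B : C} (m : A ⟶ B), Mono m →
      (∀ x : ⊤_ C ⟶ B, ∃ y : ⊤_ C ⟶ A, y ≫ m = x) → IsIso m)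
    {X : C} (x y : ⊤_ C ⟶ X) (hxy : x ≠ y) :
    Nonempty (IsInitial (pullback x y)) :=
  nonempty_isInitial_of_isEmpty_globalElements hext
    ⟨fun z => hxy (eq_of_globalElement_pullback z)⟩

/-- In a category with pullbacks, a terminal object and strict initial
objects, whose terminal object is an extremal generator, the pullback of two distinct
global elements is an initial object. -/
theorem pullback_of_distinct_points_isInitial {C : Type u} [Category.{v} C]
    [HasPullbacks C] [HasTerminal C] [HasInitial C] [HasStrictInitialObjects C]
    (hgen : ∀ {A B : C} (f g : A ⟶ B), (∀ x : ⊤_ C ⟶ A, x ≫ f = x ≫ g) → f = g)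
    (hext : ∀ {A B : C} (m : A ⟶ B), Mono m →
      (∀ x : ⊤_ C ⟶ B, ∃ y : ⊤_ C ⟶ A, y ≫ m = x) → IsIso m)
    {X : C} (x y : ⊤_ C ⟶ X) (hxy : x ≠ y) :
    Nonempty (IsInitial (pullback x y)) :=
  pullback_of_distinct_points_isInitial_general hext x y hxy
end

section
/- Let C be a category with finite limits and strict initial objects whose terminal object is an extremal generator. Let D be a category with finite limits and strict initial objects whose initial object is not isomorphic to its terminal object. Let F : C ⥤ D be a functor preserving finite limits and initial objects. Then for every object X of C, the map sending a global element x : ⊤_C ⟶ X to F.map x : F.obj ⊤_C ⟶ F.obj X is injective. -/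
/-!
Let `x y : ⊤ ⟶ X` with `F.map x = F.map y`, and let `E` be their equalizer. A global element of
`E` forces `x = y`, since `⊤ ⟶ E ⟶ ⊤` is the identity. If `E` has no global element, then
`⊥ ⟶ E` is a mono (strict initial objects) through which every global element vacuously factors,
so `E` is initial. But `F` preserves the equalizer, hence `F E ≅ F ⊤`, and it preserves `⊥` and
`⊤`, which would make `⊥ ≅ ⊤` in `D`.
-/

open CategoryTheory CategoryTheory.Limits

namespace CategoryTheory.Limits

variable {C : Type*} [Category C] [HasTerminal C]

theorem eq_of_globalElement_equalizer {X : C} {x y : ⊤_ C ⟶ X} [HasEqualizer x y]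
    (t : ⊤_ C ⟶ equalizer x y) : x = y := by
  have ht : t ≫ equalizer.ι x y = 𝟙 _ := Subsingleton.elim _ _
  calc x = (t ≫ equalizer.ι x y) ≫ x := by rw [ht, Category.id_comp]
    _ = (t ≫ equalizer.ι x y) ≫ y := by rw [Category.assoc, Category.assoc, equalizer.condition]
    _ = y := by rw [ht, Category.id_comp]

noncomputable def isInitialOfIsEmptyGlobalElements [HasInitial C] [HasStrictInitialObjects C]
    (hext : ∀ {A B : C} (m : A ⟶ B), Mono m →
      (∀ x : ⊤_ C ⟶ B, ∃ y : ⊤_ C ⟶ A, y ≫ m = x) → IsIso m)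
    {A : C} [IsEmpty (⊤_ C ⟶ A)] : IsInitial A :=
  have : IsIso (initial.to A) := hext _ inferInstance fun x => isEmptyElim x
  initialIsInitial.ofIso (asIso (initial.to A))

noncomputable def initialIsoTerminalOfIsIsoMap {D : Type*} [Category D] [HasInitial D]
    [HasTerminal D] (F : C ⥤ D) [PreservesColimit (Functor.empty.{0} C) F]
    [PreservesLimit (Functor.empty.{0} C) F] {A : C} (hA : IsInitial A) (m : A ⟶ ⊤_ C)
    [IsIso (F.map m)] : (⊥_ D) ≅ (⊤_ D) :=
  initialIsoIsInitial (hA.isInitialObj F) ≪≫ asIso (F.map m) ≪≫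
    (terminalIsTerminal.isTerminalObj F).uniqueUpToIso terminalIsTerminal

end CategoryTheory.Limits

universe v₁ u₁ v₂ u₂

theorem injective_on_global_elements_general
    {C : Type u₁} [Category.{v₁} C] [HasFiniteLimits C]
    [HasInitial C] [HasStrictInitialObjects C]
    (hext : ∀ {A B : C} (m : A ⟶ B), Mono m →
      (∀ x : ⊤_ C ⟶ B, ∃ y : ⊤_ C ⟶ A, y ≫ m = x) → IsIso m)
    {D : Type u₂} [Category.{v₂} D] [HasFiniteLimits D]
    [HasInitial D]
    (hD : IsEmpty ((⊥_ D) ≅ (⊤_ D)))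
    (F : C ⥤ D) [PreservesFiniteLimits F] [PreservesColimit (Functor.empty.{0} C) F]
    (X : C) :
    Function.Injective (fun x : ⊤_ C ⟶ X => F.map x) := by
  intro x y hxy
  by_contra hne
  have : IsEmpty (⊤_ C ⟶ equalizer x y) := ⟨fun t => hne (eq_of_globalElement_equalizer t)⟩
  have hinit : IsInitial (equalizer x y) := isInitialOfIsEmptyGlobalElements hext
  have : IsIso (F.map (equalizer.ι x y)) :=
    isIso_limit_cone_parallelPair_of_eq hxy (isLimitOfHasEqualizerOfPreservesLimit F x y)
  exact hD.elim (initialIsoTerminalOfIsIsoMap F hinit (equalizer.ι x y))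

/-- A finite-limit- and initial-object-preserving functor out of a category
with finite limits and strict initial objects whose terminal object is an extremal
generator, into a category with finite limits and strict initial objects whose initial
object is not isomorphic to its terminal object, is injective on global elements. -/
theorem injective_on_global_elements
    {C : Type u₁} [Category.{v₁} C] [HasFiniteLimits C]
    [HasInitial C] [HasStrictInitialObjects C]
    (hgen : ∀ {A B : C} (f g : A ⟶ B), (∀ x : ⊤_ C ⟶ A, x ≫ f = x ≫ g) → f = g)
    (hext : ∀ {A B : C} (m : A ⟶ B), Mono m →
      (∀ x : ⊤_ C ⟶ B, ∃ y : ⊤_ C ⟶ A, y ≫ m = x) → IsIso m)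
    {D : Type u₂} [Category.{v₂} D] [HasFiniteLimits D]
    [HasInitial D] [HasStrictInitialObjects D]
    (hD : IsEmpty ((⊥_ D) ≅ (⊤_ D)))
    (F : C ⥤ D) [PreservesFiniteLimits F] [PreservesColimit (Functor.empty.{0} C) F]
    (X : C) :
    Function.Injective (fun x : ⊤_ C ⟶ X => F.map x) :=
  injective_on_global_elements_general hext hD F X
end

section
/- Let C be a well-powered category with finite limits, images, and coproducts (so that every subobject lattice of C is a complete lattice). Let F : C ⥤ Type be a functor preserving finite limits, and suppose F preserves suprema of subobjects, meaning: for every object X and every family (P_i) of subobjects of X, the subobject of F.obj X represented by F.map of the underlying monomorphism of ⨆ᵢ P_i equals ⨆ᵢ of the subobjects represented by F.map of the underlying monomorphisms of the P_i (these are monomorphisms since F preserves finite limits). Let X be an object of C such that the supremum over all global elements x : ⊤_C ⟶ X of Subobject.mk x is the top subobject of X. Then for every morphism y : F.obj ⊤_C ⟶ F.obj X there exists a global element x : ⊤_C ⟶ X with F.map x = y. -/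
open CategoryTheory CategoryTheory.Limits

universe w v u

/-- A global element `x : ⊤ ⟶ X` is (split) mono, hence gives a subobject of `X`. -/
noncomputable def pointSubobject {C : Type u} [Category.{v} C] [HasTerminal C]
    {X : C} (x : ⊤_ C ⟶ X) : Subobject X :=
  haveI : Mono x := ⟨fun _ _ _ => terminal.hom_ext _ _⟩
  Subobject.mk x

/-- The image of a subobject under a finite-limit-preserving functor (such a functor
preserves monomorphisms). -/
noncomputable def mapSubobject {C : Type u} [Category.{v} C]
    (F : C ⥤ Type w) [PreservesFiniteLimits F] {X : C} (P : Subobject X) :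
    Subobject (F.obj X) :=
  haveI : Mono (F.map P.arrow) := preserves_mono_of_preservesLimit F P.arrow
  Subobject.mk (F.map P.arrow)

/-- Supremum of subobjects, with the smallness universe pinned to the hom universe `v`
(as `WellPowered C` and `HasCoproducts C` meant in the older Mathlib). -/
noncomputable instance subobjectSupSetHom {C : Type u} [Category.{v} C] [WellPowered.{v} C]
    [HasImages C] [HasCoproducts.{v} C] {X : C} : SupSet (Subobject X) :=
  (Subobject.completeSemilatticeSup.{v}).toSupSet

/-- In `Type`, if a supremum of subobjects is `⊤`, every element lies in the range of
one of the subobjects' arrows. -/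
theorem mem_range_of_iSup_eq_top {A : Type w} {ι : Type v} (Q : ι → Subobject A)
    (h : (⨆ i, Q i) = ⊤) (a : A) : ∃ i b, (Q i).arrow b = a := by
  let s : Set A := {a | ∃ i b, (Q i).arrow b = a}
  haveI : Mono (↾(Subtype.val : s → A)) :=
    (CategoryTheory.mono_iff_injective _).mpr Subtype.val_injective
  have hle : ∀ i, Q i ≤ Subobject.mk (↾(Subtype.val : s → A)) := by
    intro i
    conv_lhs => rw [← Subobject.mk_arrow (Q i)]
    exact Subobject.mk_le_mk_of_comm
      (↾(fun b => (⟨(Q i).arrow b, ⟨i, b, rfl⟩⟩ : s))) rfl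
  have htop : (⊤ : Subobject A) ≤ Subobject.mk (↾(Subtype.val : s → A)) := by
    letI : CompleteSemilatticeSup (Subobject A) := Subobject.completeSemilatticeSup.{w}
    rw [← h]; exact sSup_le (by rintro _ ⟨i, rfl⟩; exact hle i)
  have : Subobject.mk (↾(Subtype.val : s → A)) = ⊤ := le_antisymm le_top htop
  have hiso : IsIso (↾(Subtype.val : s → A)) := (Subobject.isIso_iff_mk_eq_top _).mpr this
  have hsurj : Function.Surjective (Subtype.val : s → A) := by
    have he : Epi (↾(Subtype.val : s → A)) := inferInstance
    exact (CategoryTheory.epi_iff_surjective _).mp he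
  obtain ⟨⟨_, i, b, hb⟩, rfl⟩ := hsurj a
  exact ⟨i, b, hb⟩

/-- If a finite-limit-preserving functor `F : C ⥤ Type` preserves suprema
of subobjects, and `X` is an object of `C` which is the supremum of its global elements,
then every global element of `F.obj X` is the image under `F` of a global element
of `X`. -/
theorem surjective_on_global_elements
    {C : Type u} [Category.{v} C] [WellPowered.{v} C] [HasFiniteLimits C]
    [HasImages C] [HasCoproducts.{v} C]
    (F : C ⥤ Type w) [PreservesFiniteLimits F]
    (hsup : ∀ {X : C} {ι : Type v} (P : ι → Subobject X),
      mapSubobject F (⨆ i, P i) = ⨆ i, mapSubobject F (P i))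
    (X : C)
    (hX : (⨆ x : ⊤_ C ⟶ X, pointSubobject x) = (⊤ : Subobject X))
    (y : F.obj (⊤_ C) ⟶ F.obj X) :
    ∃ x : ⊤_ C ⟶ X, F.map x = y := by
  -- `F.obj ⊤` is a singleton
  have hterm : IsTerminal (F.obj (⊤_ C)) :=
    IsTerminal.isTerminalObj F _ terminalIsTerminal
  have huniq : ∀ a b : F.obj (⊤_ C), a = b := by
    intro a b
    have := hterm.hom_ext ((↾(fun _ => a) : PUnit.{w+1} ⟶ F.obj (⊤_ C)))
      ((↾(fun _ => b) : PUnit.{w+1} ⟶ F.obj (⊤_ C)))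
    exact ConcreteCategory.congr_hom this PUnit.unit
  let t : F.obj (⊤_ C) := hterm.from PUnit.{w+1} PUnit.unit
  -- mapSubobject of ⊤ is ⊤
  have htopmap : mapSubobject F (⊤ : Subobject X) = ⊤ := by
    haveI : IsIso ((⊤ : Subobject X).arrow) := inferInstance
    haveI : IsIso (F.map (⊤ : Subobject X).arrow) := inferInstance
    exact Subobject.mk_eq_top_of_isIso _
  have hsup' : (⨆ x : ⊤_ C ⟶ X, mapSubobject F (pointSubobject x)) = ⊤ := by
    rw [← hsup (fun x : ⊤_ C ⟶ X => pointSubobject x), hX, htopmap]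
  obtain ⟨x, b, hb⟩ := mem_range_of_iSup_eq_top _ hsup' (y t)
  -- unfold the arrow of `mapSubobject F (pointSubobject x)`
  refine ⟨x, ?_⟩
  haveI : Mono x := ⟨fun _ _ _ => terminal.hom_ext _ _⟩
  haveI : Mono (F.map (pointSubobject x).arrow) :=
    preserves_mono_of_preservesLimit F (pointSubobject x).arrow
  have harr : (mapSubobject F (pointSubobject x)).arrow =
      (Subobject.underlyingIso (F.map (pointSubobject x).arrow)).hom ≫
        F.map (pointSubobject x).arrow := by
    rw [Subobject.underlyingIso_hom_comp_eq_mk]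
    rfl
  have harr2 : (pointSubobject x).arrow = (Subobject.underlyingIso x).hom ≫ x := by
    rw [Subobject.underlyingIso_hom_comp_eq_mk]
    rfl
  have heq : F.map (pointSubobject x).arrow =
      F.map (Subobject.underlyingIso x).hom ≫ F.map x := by
    rw [← F.map_comp, ← harr2]; rfl
  have hb' : F.map (pointSubobject x).arrow
      ((Subobject.underlyingIso (F.map (pointSubobject x).arrow)).hom b) = y t := by
    rw [← hb, harr]; rfl
  obtain ⟨c, hc⟩ : ∃ c, F.map (pointSubobject x).arrow c = y t := ⟨_, hb'⟩
  rw [heq] at hc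
  have hb : F.map x (F.map (Subobject.underlyingIso x).hom c) = y t := hc
  -- so `y t = F.map x c` for some `c`; but `c = t`
  refine ConcreteCategory.hom_ext _ _ fun a => ?_
  have ha : a = t := huniq a t
  subst ha
  rw [← hb]
  exact congrArg (F.map x) (huniq _ _)
end

section
/- Let C be a well-powered category with finite limits, images, coproducts, and strict initial objects, whose terminal object ⊤_C is an extremal generator. Let F : C ⥤ Type be a functor preserving finite limits and initial objects, and suppose F preserves suprema of subobjects, meaning: for every object X and every family (P_i) of subobjects of X, the subobject of F.obj X represented by F.map of the underlying monomorphism of ⨆ᵢ P_i equals ⨆ᵢ of the subobjects represented by F.map of the underlying monomorphisms of the P_i. Then for every object X of C, the map sending a global element x : ⊤_C ⟶ X to F.map x : F.obj ⊤_C ⟶ F.obj X is a bijection. -/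
open CategoryTheory CategoryTheory.Limits

universe w v u

noncomputable instance subobjectSupSet {C : Type u} [Category.{v} C] [WellPowered.{v} C]
    [HasCoproducts.{v} C] [HasImages C] {B : C} : SupSet (Subobject B) :=
  (Subobject.completeSemilatticeSup.{v} (B := B)).toSupSet

lemma range_mono_over_iso {α : Type w} {m n : MonoOver α} (i : m ≅ n) :
    Set.range m.obj.hom = Set.range n.obj.hom := by
  have h := le_antisymm (leOfHom ((Types.monoOverEquivalenceSet α).functor.map i.hom))
    (leOfHom ((Types.monoOverEquivalenceSet α).functor.map i.inv))
  simpa using h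

lemma range_mk_arrow {α A : Type w} (f : A ⟶ α) [Mono f] :
    Set.range (Subobject.mk f).arrow = Set.range f := by
  ext a
  constructor
  · rintro ⟨b, rfl⟩
    have := ConcreteCategory.congr_hom (Subobject.underlyingIso_arrow f) ((Subobject.underlyingIso f).hom b)
    simp at this ⊢
    exact ⟨(Subobject.underlyingIso f).hom b, ConcreteCategory.congr_hom (Subobject.underlyingIso_hom_comp_eq_mk f) b⟩
  · rintro ⟨b, rfl⟩
    refine ⟨(Subobject.underlyingIso f).inv b, ?_⟩
    have := ConcreteCategory.congr_hom (Subobject.underlyingIso_arrow f) b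
    simp at this ⊢

lemma subobjectEquivSet_eq_range {α : Type w} (P : Subobject α) :
    Types.subobjectEquivSet α P = Set.range P.arrow := by
  induction P using Subobject.ind with
  | h f =>
    have h1 : Types.subobjectEquivSet α (Subobject.mk f) = Set.range f := by
      unfold Types.subobjectEquivSet
      simp only [Equivalence.thinSkeletonOrderIso, Equivalence.toOrderIso, Equivalence.trans,
        Subobject.mk, RelIso.coe_fn_mk, Equiv.coe_fn_mk, Functor.comp_obj]
      have i : (ThinSkeleton.fromThinSkeleton (MonoOver α)).obj
          ((toThinSkeleton (MonoOver α)).obj (MonoOver.mk f)) ≅ MonoOver.mk f :=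
        (ThinSkeleton.equivalence (MonoOver α)).counitIso.app (MonoOver.mk f)
      exact (range_mono_over_iso i).trans (by simp [MonoOver.mk]; rfl)
    rw [h1, ← range_mk_arrow f]

/-- Let `C` be a well-powered category with finite limits, images,
coproducts and strict initial objects, whose terminal object is an extremal generator.
A functor `F : C ⥤ Type` preserving finite limits, initial objects and suprema of
subobjects is bijective on global elements. -/
theorem bijective_on_global_elements
    {C : Type u} [Category.{v} C] [WellPowered.{v} C] [HasFiniteLimits C]
    [HasImages C] [HasCoproducts.{v} C] [HasInitial C] [HasStrictInitialObjects C]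
    (hgen : ∀ {A B : C} (f g : A ⟶ B), (∀ x : ⊤_ C ⟶ A, x ≫ f = x ≫ g) → f = g)
    (hext : ∀ {A B : C} (m : A ⟶ B), Mono m →
      (∀ x : ⊤_ C ⟶ B, ∃ y : ⊤_ C ⟶ A, y ≫ m = x) → IsIso m)
    (F : C ⥤ Type w) [PreservesFiniteLimits F] [PreservesColimit (Functor.empty.{0} C) F]
    (hsup : ∀ {X : C} {ι : Type v} (P : ι → Subobject X),
      mapSubobject F (⨆ i, P i) = ⨆ i, mapSubobject F (P i))
    (X : C) :
    Function.Bijective (fun x : ⊤_ C ⟶ X => F.map x) := by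
  -- `F.obj ⊤` has a unique element
  have equiv : F.obj (⊤_ C) ≃ PUnit.{w + 1} :=
    (PreservesTerminal.iso F ≪≫ Types.terminalIso).toEquiv
  haveI hsub : Subsingleton (F.obj (⊤_ C)) := equiv.subsingleton
  have hne : Nonempty (F.obj (⊤_ C)) := ⟨equiv.symm PUnit.unit⟩
  obtain ⟨pt⟩ := hne
  -- Key: every element of `F.obj A` comes from a global element of `A`
  have key : ∀ (A : C) (a : F.obj A), ∃ x : ⊤_ C ⟶ A, F.map x pt = a := by
    intro A a
    set P : (⊤_ C ⟶ A) → Subobject A := fun x => pointSubobject x with hP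
    have hS : (⨆ x, P x) = ⊤ := by
      rw [← Subobject.isIso_arrow_iff_eq_top]
      apply hext _ inferInstance
      intro x
      haveI : Mono x := ⟨fun _ _ _ => terminal.hom_ext _ _⟩
      have hle : Subobject.mk x ≤ ⨆ y, P y := @le_sSup (Subobject A) Subobject.completeSemilatticeSup.{v} _ _ ⟨x, rfl⟩
      exact ⟨Subobject.ofMkLE x _ hle, Subobject.ofMkLE_arrow hle⟩
    have hmap : (⊤ : Subobject (F.obj A)) = ⨆ x, mapSubobject F (P x) := by
      rw [← hsup P, hS]
      have : IsIso (F.map (⊤ : Subobject A).arrow) := inferInstance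
      exact (Subobject.mk_eq_top_of_isIso (F.map (⊤ : Subobject A).arrow)).symm
    -- transport to `Set`
    have hmem : a ∈ ⋃ x, Set.range (mapSubobject F (P x)).arrow := by
      letI : CompleteLattice (Subobject (F.obj A)) := Subobject.instCompleteLattice.{w}
      have h2 := congrArg (Types.subobjectEquivSet (F.obj A)) hmap
      rw [map_top] at h2
      have h3 : Types.subobjectEquivSet (F.obj A) (⨆ x, mapSubobject F (P x)) = ⨆ x, Types.subobjectEquivSet (F.obj A) (mapSubobject F (P x)) := by
        exact (OrderIso.map_iSup (α := Subobject (F.obj A)) (β := Set (F.obj A)) (ι := ⊤_ C ⟶ A) (Types.subobjectEquivSet (F.obj A)) (fun x => mapSubobject F (P x)) :)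
      replace h2 := h2.trans h3
      simp only [subobjectEquivSet_eq_range] at h2
      have ha : a ∈ (⊤ : Set (F.obj A)) := trivial
      rw [h2] at ha
      simpa [Set.iSup_eq_iUnion] using ha
    obtain ⟨s, ⟨x, rfl⟩, hx⟩ := hmem
    haveI : Mono x := ⟨fun _ _ _ => terminal.hom_ext _ _⟩
    haveI : Mono (F.map (P x).arrow) := preserves_mono_of_preservesLimit F (P x).arrow
    have hx' : a ∈ Set.range (F.map (P x).arrow) := by
      rw [← range_mk_arrow (F.map (P x).arrow)]
      exact hx
    obtain ⟨b, hb'⟩ := hx'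
    -- (P x).arrow = underlyingIso.hom ≫ x
    have harr : (P x).arrow = (Subobject.underlyingIso x).hom ≫ x :=
      (Subobject.underlyingIso_hom_comp_eq_mk x).symm
    refine ⟨x, ?_⟩
    rw [← hb', harr]
    simp only [Functor.map_comp_apply]
    exact (congrArg (F.map x) (Subsingleton.elim _ _)).trans (F.map_comp_apply _ _ b).symm
  constructor
  · intro x y hxy
    simp only at hxy
    have hEl : ∃ z : ⊤_ C ⟶ equalizer x y, True := by
      have q : F.obj (⊤_ C) ⟶ equalizer (F.map x) (F.map y) :=
        equalizer.lift (𝟙 _) (by rw [hxy])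
      obtain ⟨z, _⟩ := key (equalizer x y) ((PreservesEqualizer.iso F x y).inv (q pt))
      exact ⟨z, trivial⟩
    obtain ⟨z, -⟩ := hEl
    have h1 : z ≫ equalizer.ι x y = 𝟙 (⊤_ C) := terminal.hom_ext _ _
    calc x = (z ≫ equalizer.ι x y) ≫ x := by rw [h1, Category.id_comp]
    _ = (z ≫ equalizer.ι x y) ≫ y := by rw [Category.assoc, equalizer.condition, Category.assoc]
    _ = y := by rw [h1, Category.id_comp]
  · intro g
    obtain ⟨x, hx⟩ := key X (g pt)
    refine ⟨x, ?_⟩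
    ext p
    have : p = pt := Subsingleton.elim _ _
    rw [this]
    exact hx
end
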